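/- Let P̃_A and P̃_B be g×g complex matrices and let A, B, C, D be g×g integer matrices satisfying the symplectic relations. Assume A·Im(P̃_A) + B·Im(P̃_B) = 0, C·Re(P̃_A) + D·Re(P̃_B) = 0, that A·Re(P̃_A) + B·Re(P̃_B) is invertible, and that C·Im(P̃_A) + D·Im(P̃_B) is invertible. Set M̃ = Im(P̃_B)ᵀ·Re(P̃_A) − Im(P̃_A)ᵀ·Re(P̃_B). Then M̃ is invertible, Cᵀ·A = −Re(P̃_B)·M̃⁻¹·Im(P̃_B)ᵀ and Dᵀ·B = −Re(P̃_A)·M̃⁻¹·Im(P̃_A)ᵀ. In particular the products Cᵀ·A and Dᵀ·B are uniquely determined by P̃_A and P̃_B, i.e. they do not depend on the choice of symplectic matrices A, B, C, D solving the above system. -/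

import Mathlib

open Matrix

/-- Real matrix obtained from an integer matrix by coercion of the entries. -/
def intToReal {g : ℕ} (A : Matrix (Fin g) (Fin g) ℤ) : Matrix (Fin g) (Fin g) ℝ :=
  A.map (Int.cast : ℤ → ℝ)

/-- Entrywise real part of a complex matrix. -/
def reM {g : ℕ} (P : Matrix (Fin g) (Fin g) ℂ) : Matrix (Fin g) (Fin g) ℝ :=
  P.map Complex.re

/-- Entrywise imaginary part of a complex matrix. -/
def imM {g : ℕ} (P : Matrix (Fin g) (Fin g) ℂ) : Matrix (Fin g) (Fin g) ℝ :=
  P.map Complex.im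

/-!
Write `S = [[A, B], [C, D]]`. The symplectic relations say that `[[Dᵀ, -Bᵀ], [-Cᵀ, Aᵀ]]` is a
left inverse of `S`, and the hypotheses say that `S · [[Re P̃_A, Im P̃_A], [Re P̃_B, Im P̃_B]]` is
block diagonal with blocks `X = A·Re P̃_A + B·Re P̃_B` and `Y = C·Im P̃_A + D·Im P̃_B`. Hence
`Re P̃_A = Dᵀ X`, `Re P̃_B = -Cᵀ X`, `Im P̃_A = -Bᵀ Y`, `Im P̃_B = Aᵀ Y`, so that `M̃ = Yᵀ X` is
invertible and `Re P̃_B · M̃⁻¹ · (Im P̃_B)ᵀ = -Cᵀ X X⁻¹ (Yᵀ)⁻¹ Yᵀ A = -Cᵀ A`; likewise for `Dᵀ B`.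
-/

variable {n m R S : Type*} [Fintype n] [DecidableEq n] [CommRing R] [CommRing S]

theorem Matrix.mul_inv_mul_mul_cancel {X Z : Matrix n n R} (hX : IsUnit X) (hZ : IsUnit Z) :
    X * (Z * X)⁻¹ * Z = 1 := by
  rw [isUnit_iff_isUnit_det] at hX hZ
  rw [Matrix.mul_inv_rev, Matrix.mul_assoc, Matrix.mul_assoc, Matrix.nonsing_inv_mul _ hZ,
    Matrix.mul_one, Matrix.mul_nonsing_inv _ hX]

def SymplecticRelations (a b c d : Matrix n n R) : Prop :=
  aᵀ * d - cᵀ * b = 1 ∧ aᵀ * c = cᵀ * a ∧ dᵀ * b = bᵀ * d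

namespace SymplecticRelations

variable {a b c d : Matrix n n R}

theorem map (f : R →+* S) (hS : SymplecticRelations a b c d) :
    SymplecticRelations (a.map f) (b.map f) (c.map f) (d.map f) := by
  obtain ⟨h1, h2, h3⟩ := hS
  have hmap (x y : Matrix n n R) : (x.map f)ᵀ * y.map f = f.mapMatrix (xᵀ * y) := by
    rw [RingHom.mapMatrix_apply, Matrix.map_mul, transpose_map]
  refine ⟨?_, ?_, ?_⟩
  · rw [hmap, hmap, ← map_sub, h1, map_one]
  · rw [hmap, hmap, h2]
  · rw [hmap, hmap, h3]

theorem transpose_mul_sub_transpose_mul (hS : SymplecticRelations a b c d) :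
    dᵀ * a - bᵀ * c = 1 := by
  simpa [transpose_sub] using congrArg transpose hS.1

theorem inv_mul_fst (hS : SymplecticRelations a b c d) (u v : Matrix n m R) :
    dᵀ * (a * u + b * v) - bᵀ * (c * u + d * v) = u := by
  calc dᵀ * (a * u + b * v) - bᵀ * (c * u + d * v)
      = (dᵀ * a - bᵀ * c) * u + (dᵀ * b - bᵀ * d) * v := by
        simp only [Matrix.mul_add, Matrix.sub_mul, Matrix.mul_assoc]; abel
    _ = u := by rw [hS.transpose_mul_sub_transpose_mul, hS.2.2, sub_self]; simp

theorem inv_mul_snd (hS : SymplecticRelations a b c d) (u v : Matrix n m R) :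
    aᵀ * (c * u + d * v) - cᵀ * (a * u + b * v) = v := by
  calc aᵀ * (c * u + d * v) - cᵀ * (a * u + b * v)
      = (aᵀ * c - cᵀ * a) * u + (aᵀ * d - cᵀ * b) * v := by
        simp only [Matrix.mul_add, Matrix.sub_mul, Matrix.mul_assoc]; abel
    _ = v := by rw [hS.1, hS.2.1, sub_self]; simp

theorem transpose_mul_top_of_bottom_eq_zero (hS : SymplecticRelations a b c d)
    {u v : Matrix n m R} (h : c * u + d * v = 0) :
    dᵀ * (a * u + b * v) = u ∧ cᵀ * (a * u + b * v) = -v := by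
  have hu := hS.inv_mul_fst u v
  have hv := hS.inv_mul_snd u v
  rw [h, Matrix.mul_zero, sub_zero] at hu
  rw [h, Matrix.mul_zero, zero_sub] at hv
  exact ⟨hu, neg_eq_iff_eq_neg.mp hv⟩

theorem transpose_mul_bottom_of_top_eq_zero (hS : SymplecticRelations a b c d)
    {u v : Matrix n m R} (h : a * u + b * v = 0) :
    bᵀ * (c * u + d * v) = -u ∧ aᵀ * (c * u + d * v) = v := by
  have hu := hS.inv_mul_fst u v
  have hv := hS.inv_mul_snd u v
  rw [h, Matrix.mul_zero, zero_sub] at hu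
  rw [h, Matrix.mul_zero, sub_zero] at hv
  exact ⟨neg_eq_iff_eq_neg.mp hu, hv⟩

theorem isUnit_and_transpose_mul_eq_neg_mul_inv_mul (hS : SymplecticRelations a b c d) {RA RB IA IB : Matrix n n R}
    (hI : a * IA + b * IB = 0) (hR : c * RA + d * RB = 0)
    (hX : IsUnit (a * RA + b * RB)) (hY : IsUnit (c * IA + d * IB)) :
    IsUnit (IBᵀ * RA - IAᵀ * RB)
    ∧ cᵀ * a = -(RB * (IBᵀ * RA - IAᵀ * RB)⁻¹ * IBᵀ)
    ∧ dᵀ * b = -(RA * (IBᵀ * RA - IAᵀ * RB)⁻¹ * IAᵀ) := by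
  obtain ⟨hdX, hcX⟩ := hS.transpose_mul_top_of_bottom_eq_zero hR
  obtain ⟨hbY, haY⟩ := hS.transpose_mul_bottom_of_top_eq_zero hI
  set X := a * RA + b * RB
  set Y := c * IA + d * IB
  have hM : IBᵀ * RA - IAᵀ * RB = Yᵀ * X := by
    rw [← haY, ← neg_neg IA, ← hbY]
    simp only [transpose_mul, transpose_neg, transpose_transpose, Matrix.neg_mul, sub_neg_eq_add,
      Matrix.mul_assoc, ← Matrix.mul_add, X]
  have hYT : IsUnit Yᵀ := (isUnit_transpose Y).mpr hY
  have hcancel : X * (Yᵀ * X)⁻¹ * Yᵀ = 1 := Matrix.mul_inv_mul_mul_cancel hX hYT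
  refine ⟨hM ▸ hYT.mul hX, ?_, ?_⟩
  · calc cᵀ * a = cᵀ * (X * (Yᵀ * X)⁻¹ * Yᵀ) * a := by rw [hcancel, Matrix.mul_one]
      _ = -(-(cᵀ * X) * (Yᵀ * X)⁻¹ * (Yᵀ * a)) := by
          simp only [Matrix.neg_mul, neg_neg, Matrix.mul_assoc]
      _ = _ := by rw [hcX, neg_neg, hM, ← haY, transpose_mul, transpose_transpose]
  · calc dᵀ * b = dᵀ * (X * (Yᵀ * X)⁻¹ * Yᵀ) * b := by rw [hcancel, Matrix.mul_one]
      _ = -(dᵀ * X * (Yᵀ * X)⁻¹ * -(Yᵀ * b)) := by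
          simp only [Matrix.mul_neg, neg_neg, Matrix.mul_assoc]
      _ = _ := by
          rw [hdX, hM, ← neg_neg IA, ← hbY, transpose_neg, transpose_mul, transpose_transpose]

end SymplecticRelations

theorem SymplecticRelations.intToReal {g : ℕ} {A B C D : Matrix (Fin g) (Fin g) ℤ}
    (h : SymplecticRelations A B C D) :
    SymplecticRelations (intToReal A) (intToReal B) (intToReal C) (intToReal D) :=
  h.map (Int.castRingHom ℝ)

theorem remark_Mcurve_characteristics_general
    (g : ℕ)
    (PA PB : Matrix (Fin g) (Fin g) ℂ)
    (A B C D : Matrix (Fin g) (Fin g) ℤ)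
    (hs1 : Aᵀ * D - Cᵀ * B = 1)
    (hs2 : Aᵀ * C = Cᵀ * A)
    (hs3 : Dᵀ * B = Bᵀ * D)
    (h1 : intToReal A * imM PA + intToReal B * imM PB = 0)
    (h2 : intToReal C * reM PA + intToReal D * reM PB = 0)
    (h3 : IsUnit (intToReal A * reM PA + intToReal B * reM PB))
    (h4 : IsUnit (intToReal C * imM PA + intToReal D * imM PB)) :
    IsUnit ((imM PB)ᵀ * reM PA - (imM PA)ᵀ * reM PB)
    ∧ (intToReal C)ᵀ * intToReal A
        = -(reM PB * ((imM PB)ᵀ * reM PA - (imM PA)ᵀ * reM PB)⁻¹ * (imM PB)ᵀ)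
    ∧ (intToReal D)ᵀ * intToReal B
        = -(reM PA * ((imM PB)ᵀ * reM PA - (imM PA)ᵀ * reM PB)⁻¹ * (imM PA)ᵀ)
    ∧ (∀ A' B' C' D' : Matrix (Fin g) (Fin g) ℤ,
        A'ᵀ * D' - C'ᵀ * B' = 1 → A'ᵀ * C' = C'ᵀ * A' → D'ᵀ * B' = B'ᵀ * D' →
        intToReal A' * imM PA + intToReal B' * imM PB = 0 →
        intToReal C' * reM PA + intToReal D' * reM PB = 0 →
        IsUnit (intToReal A' * reM PA + intToReal B' * reM PB) →
        IsUnit (intToReal C' * imM PA + intToReal D' * imM PB) →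
        (intToReal C')ᵀ * intToReal A' = (intToReal C)ᵀ * intToReal A
        ∧ (intToReal D')ᵀ * intToReal B' = (intToReal D)ᵀ * intToReal B) := by
  obtain ⟨hu, hCA, hDB⟩ :=
    (SymplecticRelations.intToReal ⟨hs1, hs2, hs3⟩).isUnit_and_transpose_mul_eq_neg_mul_inv_mul h1 h2 h3 h4
  refine ⟨hu, hCA, hDB, fun A' B' C' D' hs1' hs2' hs3' h1' h2' h3' h4' => ?_⟩
  obtain ⟨-, hCA', hDB'⟩ :=
    (SymplecticRelations.intToReal ⟨hs1', hs2', hs3'⟩).isUnit_and_transpose_mul_eq_neg_mul_inv_mul h1' h2' h3' h4'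
  exact ⟨hCA'.trans hCA.symm, hDB'.trans hDB.symm⟩

/-- Remark 4.2 (case `H = 0`, M-curves): `M̃` is invertible,
`Cᵀ·A = −Re(P̃_B)·M̃⁻¹·Im(P̃_B)ᵀ` and `Dᵀ·B = −Re(P̃_A)·M̃⁻¹·Im(P̃_A)ᵀ`; in particular
the products `Cᵀ·A` and `Dᵀ·B` do not depend on the choice of symplectic matrices
`A, B, C, D` solving the system. -/
theorem remark_Mcurve_characteristics
    (g : ℕ) (hg : 1 ≤ g)
    (PA PB : Matrix (Fin g) (Fin g) ℂ)
    (A B C D : Matrix (Fin g) (Fin g) ℤ)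
    (hs1 : Aᵀ * D - Cᵀ * B = 1)
    (hs2 : Aᵀ * C = Cᵀ * A)
    (hs3 : Dᵀ * B = Bᵀ * D)
    (h1 : intToReal A * imM PA + intToReal B * imM PB = 0)
    (h2 : intToReal C * reM PA + intToReal D * reM PB = 0)
    (h3 : IsUnit (intToReal A * reM PA + intToReal B * reM PB))
    (h4 : IsUnit (intToReal C * imM PA + intToReal D * imM PB)) :
    IsUnit ((imM PB)ᵀ * reM PA - (imM PA)ᵀ * reM PB)
    ∧ (intToReal C)ᵀ * intToReal A
        = -(reM PB * ((imM PB)ᵀ * reM PA - (imM PA)ᵀ * reM PB)⁻¹ * (imM PB)ᵀ)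
    ∧ (intToReal D)ᵀ * intToReal B
        = -(reM PA * ((imM PB)ᵀ * reM PA - (imM PA)ᵀ * reM PB)⁻¹ * (imM PA)ᵀ)
    ∧ (∀ A' B' C' D' : Matrix (Fin g) (Fin g) ℤ,
        A'ᵀ * D' - C'ᵀ * B' = 1 → A'ᵀ * C' = C'ᵀ * A' → D'ᵀ * B' = B'ᵀ * D' →
        intToReal A' * imM PA + intToReal B' * imM PB = 0 →
        intToReal C' * reM PA + intToReal D' * reM PB = 0 →
        IsUnit (intToReal A' * reM PA + intToReal B' * reM PB) →
        IsUnit (intToReal C' * imM PA + intToReal D' * imM PB) →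
        (intToReal C')ᵀ * intToReal A' = (intToReal C)ᵀ * intToReal A
        ∧ (intToReal D')ᵀ * intToReal B' = (intToReal D)ᵀ * intToReal B) :=
  remark_Mcurve_characteristics_general g PA PB A B C D hs1 hs2 hs3 h1 h2 h3 h4
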